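/- With φ(x) = 1 − x, the quantity S₂ = inf_{α₂ > Δx/Δt} inf_{α₁ ∈ ℝ} [ 1 + (Δt − Δx/α₂)α₁ + (Δt − Δx/α₂)(α₁²/2 + 1) + (Δx/α₂)(α₂²/2 + 2) ] equals 1 + √3·Δx + Δt/2, attained at α₁ = −1, α₂ = √3, provided √3 > Δx/Δt. -/

import Mathlib

/-!
Completing the square in `α₁` and using `Δx / α₂ · α₂ = Δx` turns the cost into
`1 + Δt/2 + (Δt - Δx/α₂)(α₁ + 1)²/2 + (Δx/2)(α₂ + 3/α₂)`.
Admissible speeds `α₂ > Δx/Δt` make the weight `Δt - Δx/α₂` positive, so the middle term is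
minimised at `α₁ = -1`, and AM-GM gives `α₂ + 3/α₂ ≥ 2√3` with equality at `α₂ = √3`.
-/

open Real

theorem two_mul_sqrt_le_add_div {a c : ℝ} (ha : 0 < a) (hc : 0 ≤ c) :
    2 * √c ≤ a + c / a := by
  have key : a + c / a - 2 * √c = (a - √c) ^ 2 / a := by
    field_simp
    rw [sub_sq, sq_sqrt hc]
    ring
  have : 0 ≤ (a - √c) ^ 2 / a := by positivity
  linarith

/-- The semi-Lagrangian cost of a trajectory that runs on branch 1 with speed `α₁` for time
`Δt - Δx/α₂` and then crosses the cell of length `Δx` on branch 2 with speed `α₂`, starting from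
the test function `φ x = 1 - x`. -/
noncomputable def crossingCost (Δx Δt α₁ α₂ : ℝ) : ℝ :=
  1 + (Δt - Δx / α₂) * α₁ + (Δt - Δx / α₂) * (α₁ ^ 2 / 2 + 1) + Δx / α₂ * (α₂ ^ 2 / 2 + 2)

theorem crossingCost_eq {α₂ : ℝ} (Δx Δt α₁ : ℝ) (hα₂ : α₂ ≠ 0) :
    crossingCost Δx Δt α₁ α₂ =
      1 + Δt / 2 + (Δt - Δx / α₂) * (α₁ + 1) ^ 2 / 2 + Δx / 2 * (α₂ + 3 / α₂) := by
  unfold crossingCost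
  field_simp
  ring

theorem crossingCost_ge {Δx Δt α₂ : ℝ} (α₁ : ℝ) (hΔx : 0 < Δx) (hΔt : 0 < Δt)
    (hα₂ : Δx / Δt < α₂) :
    1 + √3 * Δx + Δt / 2 ≤ crossingCost Δx Δt α₁ α₂ := by
  have hα₂_pos : 0 < α₂ := (div_pos hΔx hΔt).trans hα₂
  have hweight : 0 ≤ Δt - Δx / α₂ := sub_nonneg.mpr ((div_lt_comm₀ hΔt hα₂_pos).mp hα₂).le
  have hamgm : 2 * √3 ≤ α₂ + 3 / α₂ := two_mul_sqrt_le_add_div hα₂_pos (by norm_num)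
  rw [crossingCost_eq Δx Δt α₁ hα₂_pos.ne']
  have hsq : 0 ≤ (Δt - Δx / α₂) * (α₁ + 1) ^ 2 / 2 := by positivity
  have := mul_le_mul_of_nonneg_left hamgm hΔx.le
  linarith

theorem crossingCost_neg_one_sqrt_three (Δx Δt : ℝ) :
    crossingCost Δx Δt (-1) √3 = 1 + √3 * Δx + Δt / 2 := by
  rw [crossingCost_eq Δx Δt (-1) (by positivity), div_sqrt]
  ring

theorem sl_branch_crossing_general (Δx Δt : ℝ) (hΔx : 0 < Δx) (hΔt : 0 < Δt) :
    (∀ α₁ α₂ : ℝ, Δx / Δt < α₂ →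
        1 + Real.sqrt 3 * Δx + Δt / 2 ≤
          1 + (Δt - Δx / α₂) * α₁ + (Δt - Δx / α₂) * (α₁ ^ 2 / 2 + 1)
            + Δx / α₂ * (α₂ ^ 2 / 2 + 2)) ∧
    1 + (Δt - Δx / Real.sqrt 3) * (-1) + (Δt - Δx / Real.sqrt 3) * ((-1 : ℝ) ^ 2 / 2 + 1)
        + Δx / Real.sqrt 3 * ((Real.sqrt 3) ^ 2 / 2 + 2)
      = 1 + Real.sqrt 3 * Δx + Δt / 2 :=
  ⟨fun α₁ _ hα₂ => crossingCost_ge α₁ hΔx hΔt hα₂, crossingCost_neg_one_sqrt_three Δx Δt⟩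

theorem sl_branch_crossing (Δx Δt : ℝ) (hΔx : 0 < Δx) (hΔt : 0 < Δt)
    (hcfl : Δx / Δt < Real.sqrt 3)
    (φ : ℝ → ℝ) (hφ : ∀ x, φ x = 1 - x) :
    (∀ α₁ α₂ : ℝ, Δx / Δt < α₂ →
        1 + Real.sqrt 3 * Δx + Δt / 2 ≤
          1 + (Δt - Δx / α₂) * α₁ + (Δt - Δx / α₂) * (α₁ ^ 2 / 2 + 1)
            + Δx / α₂ * (α₂ ^ 2 / 2 + 2)) ∧
    1 + (Δt - Δx / Real.sqrt 3) * (-1) + (Δt - Δx / Real.sqrt 3) * ((-1 : ℝ) ^ 2 / 2 + 1)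
        + Δx / Real.sqrt 3 * ((Real.sqrt 3) ^ 2 / 2 + 2)
      = 1 + Real.sqrt 3 * Δx + Δt / 2 :=
  sl_branch_crossing_general Δx Δt hΔx hΔt
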